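/- arXiv:0805.3654 — 3 statements merged into one kernel-verified Lean document; each statement's English description precedes it below -/
import Mathlib

section
/- For every t ∈ ℝ, the image measure ρ_t of the N-dimensional Lebesgue measure m under the map T_t : x ↦ Φ(x,−t) is absolutely continuous with respect to m, and its Radon–Nikodym derivative is dρ_t/dm(x) = exp(∫₀ᵗ div F(Φ(x,s)) ds) for m-almost every x ∈ ℝ^N. -/
/-!
Differentiating the flow in its initial point, the Jacobian `W t` of `Φ(·, t)` at `x` solves the
variational equation `W' = DF(Φ(x, t)) W`, `W 0 = 1`. Jacobi's formula
`(det W)' = tr(DF) det W` then gives `det W t = exp ∫₀ᵗ div F(Φ(x, s)) ds`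
(Liouville's formula).
Since `Φ(·, −t)` inverts `Φ(·, t)`, the change of variables formula says that the image of
Lebesgue measure under `Φ(·, −t)` has exactly this density.

Picard–Lindelöf solves the variational equation only on a short time interval, whose length
depends on the Lipschitz constant alone; the group law `Φ(·, a + b) = Φ(Φ(·, a), b)` and time
reversal carry Liouville's formula from there to all times.
-/

open MeasureTheory
open scoped NNReal ENNReal

noncomputable section

def diverg {N : ℕ} (F : EuclideanSpace ℝ (Fin N) → EuclideanSpace ℝ (Fin N))
    (x : EuclideanSpace ℝ (Fin N)) : ℝ :=
  ∑ i, (fderiv ℝ F x (EuclideanSpace.single i 1) : Fin N → ℝ) i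

open Set Filter Topology Metric

namespace Matrix

variable {n 𝕜 : Type*} [Fintype n] [DecidableEq n] [NontriviallyNormedField 𝕜]

def detContinuousMultilinearMap : ContinuousMultilinearMap 𝕜 (fun _ : n => n → 𝕜) 𝕜 where
  toMultilinearMap := (detRowAlternating (n := n) (R := 𝕜)).toMultilinearMap
  cont := (continuous_id (X := Matrix n n 𝕜)).matrix_det

theorem hasDerivWithinAt_det {M : 𝕜 → Matrix n n 𝕜} {M' : Matrix n n 𝕜} {s : Set 𝕜}
    {u : 𝕜} (h : ∀ i j, HasDerivWithinAt (fun t => M t i j) (M' i j) s u) :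
    HasDerivWithinAt (fun t => (M t).det) (∑ i, ((M u).updateRow i (M' i)).det) s u := by
  have hrow : ∀ i,
      HasFDerivWithinAt (fun t => M t i) ((1 : 𝕜 →L[𝕜] 𝕜).smulRight (M' i)) s u := fun i =>
    (hasDerivWithinAt_pi.2 (h i)).hasFDerivWithinAt
  refine (HasFDerivWithinAt.multilinear_comp detContinuousMultilinearMap hrow).hasDerivWithinAt
    |>.congr_deriv ?_
  simp only [detContinuousMultilinearMap, _root_.sum_apply,
    ContinuousLinearMap.comp_apply, ContinuousLinearMap.smulRight_apply,
    one_apply_eq_self, one_smul, ContinuousMultilinearMap.toContinuousLinearMap_apply]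
  rfl

theorem sum_det_updateRow_mul {R : Type*} [CommRing R] (B M : Matrix n n R) :
    ∑ i, (M.updateRow i ((B * M) i)).det = B.trace * M.det := by
  have hrow : ∀ i, (B * M) i = ∑ k, B i k • M k := fun i => by
    funext j
    simp [mul_apply, Finset.sum_apply]
  simp_rw [hrow, det_updateRow_sum]
  simp [trace, Finset.sum_mul]

end Matrix

theorem gronwallBound_zero_eq_mul (K ε x : ℝ) :
    gronwallBound 0 K ε x = ε * gronwallBound 0 K 1 x := by
  unfold gronwallBound
  split_ifs <;> ring

theorem forall_of_add_of_forall_mem_Icc {P : ℝ → Prop} {τ : ℝ} (hτ : 0 < τ)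
    (hadd : ∀ a b, P a → P b → P (a + b)) (hP : ∀ t ∈ Icc (-τ) τ, P t) (t : ℝ) : P t := by
  obtain ⟨n, hn⟩ := exists_nat_ge (|t| / τ)
  set c := t / (n + 1)
  have hc : c ∈ Icc (-τ) τ := by
    rw [mem_Icc, ← abs_le, abs_div, abs_of_pos (by positivity : (0:ℝ) < n + 1),
      div_le_iff₀ (by positivity)]
    rw [div_le_iff₀ hτ] at hn
    nlinarith [abs_nonneg t]
  have hmul : ∀ k : ℕ, P (k * c) := by
    intro k
    induction k with
    | zero => simpa using hP 0 ⟨by linarith, hτ.le⟩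
    | succ k ih => simpa [add_mul] using hadd _ _ ih (hP c hc)
  simpa [c, mul_div_cancel₀ _ (by positivity : (n:ℝ) + 1 ≠ 0)] using hmul (n + 1)

section

variable {E : Type*} [NormedAddCommGroup E] [NormedSpace ℝ E]

theorem Continuous.linearMap_trace [FiniteDimensional ℝ E] {α : Type*} [TopologicalSpace α]
    {A : α → E →L[ℝ] E} (hA : Continuous A) : Continuous fun a => LinearMap.trace ℝ E (A a) :=
  (LinearMap.continuous_of_finiteDimensional
    ((LinearMap.trace ℝ E).comp (ContinuousLinearMap.coeLM ℝ))).comp hA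

theorem HasDerivWithinAt.det_of_deriv_eq_comp [FiniteDimensional ℝ E] {W : ℝ → E →L[ℝ] E}
    {A : E →L[ℝ] E} {s : Set ℝ} {u : ℝ} (hW : HasDerivWithinAt W (A.comp (W u)) s u) :
    HasDerivWithinAt (fun t => (W t).det) (LinearMap.trace ℝ E A * (W u).det) s u := by
  let b := Module.finBasis ℝ E
  let M : ℝ → Matrix _ _ ℝ := fun t => LinearMap.toMatrix b b (W t)
  have hentry : ∀ i j, HasDerivWithinAt (fun t => M t i j)
      (LinearMap.toMatrix b b (A.comp (W u) : E →ₗ[ℝ] E) i j) s u := by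
    intro i j
    have := b.equivFunL.toContinuousLinearMap.hasFDerivAt.comp_hasDerivWithinAt u
      (hW.clm_apply (hasDerivWithinAt_const u s (b j)))
    simpa [M, LinearMap.toMatrix_apply] using hasDerivWithinAt_pi.1 this i
  have hcomp : LinearMap.toMatrix b b (A.comp (W u) : E →ₗ[ℝ] E) =
      LinearMap.toMatrix b b A * M u :=
    LinearMap.toMatrix_comp b b b _ _
  have hdet := Matrix.hasDerivWithinAt_det hentry
  rw [hcomp, Matrix.sum_det_updateRow_mul, ← LinearMap.trace_eq_matrix_trace] at hdet
  simpa only [M, LinearMap.det_toMatrix] using hdet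

theorem det_eq_exp_integral_trace [FiniteDimensional ℝ E] {A W : ℝ → E →L[ℝ] E} {s : ℝ}
    (hs : 0 ≤ s) (hA : Continuous A) (hW₀ : W 0 = 1)
    (hW : ∀ u ∈ Icc 0 s, HasDerivWithinAt W ((A u).comp (W u)) (Icc 0 s) u) :
    (W s).det = Real.exp (∫ u in (0:ℝ)..s, LinearMap.trace ℝ E (A u)) := by
  set θ : ℝ → ℝ := fun u => LinearMap.trace ℝ E (A u)
  have hθ : Continuous θ := hA.linearMap_trace
  set g : ℝ → ℝ := fun u => (W u).det * Real.exp (-∫ v in (0:ℝ)..u, θ v)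
  have hg : ∀ u ∈ Icc 0 s, HasDerivWithinAt g 0 (Icc 0 s) u := by
    intro u hu
    have hexp : HasDerivAt (fun v => Real.exp (-∫ w in (0:ℝ)..v, θ w))
        (Real.exp (-∫ w in (0:ℝ)..u, θ w) * -θ u) u :=
      (hθ.integral_hasStrictDerivAt 0 u).hasDerivAt.neg.exp
    exact ((hW u hu).det_of_deriv_eq_comp.mul hexp.hasDerivWithinAt).congr_deriv (by ring)
  have hconst := constant_of_has_deriv_right_zero (fun u hu => (hg u hu).continuousWithinAt)
    (fun u hu => (hg u (Ico_subset_Icc_self hu)).mono_of_mem_nhdsWithin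
      (Icc_mem_nhdsGE_of_mem hu)) s ⟨hs, le_rfl⟩
  have hdet_one : (1 : E →L[ℝ] E).det = 1 := LinearMap.det_id
  simp only [g, hW₀, hdet_one, intervalIntegral.integral_same, neg_zero, Real.exp_zero,
    mul_one] at hconst
  rwa [Real.exp_neg, ← div_eq_mul_inv, div_eq_one_iff_eq (Real.exp_pos _).ne'] at hconst

-- Picard–Lindelöf on the unit ball around the identity, where `‖A u ∘ W‖ ≤ 2κ`.
theorem exists_hasDerivWithinAt_comp_of_norm_le [CompleteSpace E] {A : ℝ → E →L[ℝ] E}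
    {κ : ℝ≥0} {τ : ℝ} (hτ : 0 ≤ τ) (hκτ : 2 * κ * τ ≤ 1) (hA : ContinuousOn A (Icc 0 τ))
    (hAκ : ∀ u ∈ Icc 0 τ, ‖A u‖ ≤ κ) :
    ∃ W : ℝ → E →L[ℝ] E, W 0 = 1 ∧
      ∀ u ∈ Icc 0 τ, HasDerivWithinAt W ((A u).comp (W u)) (Icc 0 τ) u := by
  have hPL : IsPicardLindelof (fun u (W : E →L[ℝ] E) => (A u).comp W) (tmin := 0) (tmax := τ)
      ⟨0, le_rfl, hτ⟩ 1 1 0 (2 * κ) κ := by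
    refine ⟨fun u hu => ?_, fun W _ => hA.clm_comp continuousOn_const, fun u hu W hW => ?_, ?_⟩
    · refine (LipschitzWith.of_dist_le_mul fun W W' => ?_).lipschitzOnWith
      rw [dist_eq_norm, dist_eq_norm, ← ContinuousLinearMap.comp_sub]
      exact ((A u).opNorm_comp_le _).trans (by gcongr; exact hAκ u hu)
    · have hW2 : ‖W‖ ≤ 2 := by
        have := norm_le_norm_add_norm_sub' W 1
        have h1 : ‖(1 : E →L[ℝ] E)‖ ≤ 1 := ContinuousLinearMap.norm_id_le
        rw [mem_closedBall, dist_eq_norm] at hW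
        push_cast at hW
        linarith
      calc ‖(A u).comp W‖ ≤ ‖A u‖ * ‖W‖ := (A u).opNorm_comp_le W
        _ ≤ κ * 2 := by gcongr; exact hAκ u hu
        _ = ((2 * κ : ℝ≥0) : ℝ) := by push_cast; ring
    · simpa [max_eq_left hτ, mul_comm] using hκτ
  exact hPL.exists_eq_forall_mem_Icc_hasDerivWithinAt₀

theorem IsCompact.exists_forall_norm_sub_sub_fderiv_le {G : Type*} [NormedAddCommGroup G]
    [NormedSpace ℝ G] {f : E → G} (hf : ContDiff ℝ 1 f) {K : Set E} (hK : IsCompact K)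
    {ε : ℝ} (hε : 0 < ε) :
    ∃ δ > 0, ∀ a ∈ K, ∀ b, ‖b - a‖ ≤ δ →
      ‖f b - f a - fderiv ℝ f a (b - a)‖ ≤ ε * ‖b - a‖ := by
  have hcont := hf.continuous_fderiv one_ne_zero
  obtain ⟨δ, hδ, hunif⟩ := Metric.mem_uniformity_dist.1
    (hK.uniformContinuousAt_of_continuousAt (fderiv ℝ f) (fun a _ => hcont.continuousAt)
      (Metric.dist_mem_uniformity hε))
  refine ⟨δ / 2, by positivity, fun a ha b hb => ?_⟩
  have hderiv : ∀ y ∈ closedBall a (δ / 2), HasFDerivWithinAt (fun y => f y - fderiv ℝ f a y)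
      (fderiv ℝ f y - fderiv ℝ f a) (closedBall a (δ / 2)) y := fun y _ =>
    ((hf.differentiable one_ne_zero y).hasFDerivAt.sub
      (fderiv ℝ f a).hasFDerivAt).hasFDerivWithinAt
  have hbound : ∀ y ∈ closedBall a (δ / 2), ‖fderiv ℝ f y - fderiv ℝ f a‖ ≤ ε := fun y hy => by
    rw [← dist_eq_norm, dist_comm]
    refine (@hunif a y ?_ ha).le
    rw [mem_closedBall, dist_comm] at hy
    exact hy.trans_lt (by linarith)
  have := (convex_closedBall a (δ / 2)).norm_image_sub_le_of_norm_hasFDerivWithin_le hderiv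
    hbound (mem_closedBall_self (by positivity)) (by rwa [mem_closedBall, dist_eq_norm])
  rwa [sub_sub_sub_comm, ← map_sub] at this

structure IsFlow (F : E → E) (Φ : E → ℝ → E) : Prop where
  apply_zero : ∀ x, Φ x 0 = x
  hasDerivAt : ∀ x t, HasDerivAt (Φ x) (F (Φ x t)) t

variable {F : E → E} {Φ : E → ℝ → E} {κ : ℝ≥0}

namespace IsFlow

theorem continuous (hΦ : IsFlow F Φ) (x : E) : Continuous (Φ x) :=
  continuous_iff_continuousAt.2 fun t => (hΦ.hasDerivAt x t).continuousAt

theorem reverse (hΦ : IsFlow F Φ) : IsFlow (-F) (fun x t => Φ x (-t)) where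
  apply_zero x := by simpa using hΦ.apply_zero x
  hasDerivAt x t := by
    simpa [Function.comp_def] using (hΦ.hasDerivAt x (-t)).scomp t (hasDerivAt_neg t)

theorem apply_add (hΦ : IsFlow F Φ) (hF : LipschitzWith κ F) (x : E) (a b : ℝ) :
    Φ x (a + b) = Φ (Φ x a) b := by
  have := ODE_solution_unique_univ (v := fun _ => F) (s := fun _ => univ) (t₀ := 0)
    (fun _ => hF.lipschitzOnWith)
    (fun u => ⟨by simpa using (hΦ.hasDerivAt x (a + u)).comp_const_add a u, mem_univ _⟩)
    (fun u => ⟨hΦ.hasDerivAt (Φ x a) u, mem_univ _⟩) (by simp [hΦ.apply_zero])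
  exact congrFun this b

theorem apply_neg_apply (hΦ : IsFlow F Φ) (hF : LipschitzWith κ F) (x : E) (t : ℝ) :
    Φ (Φ x t) (-t) = x := by
  rw [← hΦ.apply_add hF, add_neg_cancel, hΦ.apply_zero]

theorem dist_le_mul_exp (hΦ : IsFlow F Φ) (hF : LipschitzWith κ F) (x y : E) {t : ℝ}
    (ht : 0 ≤ t) : dist (Φ x t) (Φ y t) ≤ dist x y * Real.exp (κ * t) := by
  simpa [hΦ.apply_zero] using dist_le_of_trajectories_ODE (v := fun _ => F) (fun _ => hF)
    (hΦ.continuous x).continuousOn (fun u _ => (hΦ.hasDerivAt x u).hasDerivWithinAt)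
    (hΦ.continuous y).continuousOn (fun u _ => (hΦ.hasDerivAt y u).hasDerivWithinAt)
    (le_of_eq (by rw [hΦ.apply_zero, hΦ.apply_zero])) t ⟨ht, le_rfl⟩

theorem eventually_norm_sub_sub_fderiv_le (hΦ : IsFlow F Φ) (hF : LipschitzWith κ F)
    (hF₁ : ContDiff ℝ 1 F) (x₀ : E) {s ε : ℝ} (hε : 0 < ε) :
    ∀ᶠ h in 𝓝 0, ∀ u ∈ Icc 0 s, ‖F (Φ (x₀ + h) u) - F (Φ x₀ u)
      - fderiv ℝ F (Φ x₀ u) (Φ (x₀ + h) u - Φ x₀ u)‖ ≤ ε * ‖h‖ := by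
  set C := Real.exp (κ * s)
  have hC : 0 < C := Real.exp_pos _
  obtain ⟨δ, hδ, htaylor⟩ := IsCompact.exists_forall_norm_sub_sub_fderiv_le hF₁
    (isCompact_Icc.image (hΦ.continuous x₀)) (ε := ε / C) (by positivity)
  filter_upwards [closedBall_mem_nhds (0 : E) (show 0 < δ / C by positivity)] with h hh u hu
  rw [mem_closedBall, dist_zero_right, le_div_iff₀' hC] at hh
  have hdist : ‖Φ (x₀ + h) u - Φ x₀ u‖ ≤ C * ‖h‖ := by
    rw [← dist_eq_norm]
    calc _ ≤ dist (x₀ + h) x₀ * Real.exp (κ * u) := hΦ.dist_le_mul_exp hF _ _ hu.1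
      _ ≤ ‖h‖ * C := by
        rw [dist_eq_norm, add_sub_cancel_left]
        gcongr
        exact Real.exp_le_exp.2 (mul_le_mul_of_nonneg_left hu.2 κ.2)
      _ = C * ‖h‖ := mul_comm _ _
  calc _ ≤ ε / C * ‖Φ (x₀ + h) u - Φ x₀ u‖ :=
        htaylor _ (mem_image_of_mem _ hu) _ (hdist.trans hh)
    _ ≤ ε / C * (C * ‖h‖) := by gcongr
    _ = ε * ‖h‖ := by field_simp

-- `Φ (x₀ + h) · - Φ x₀ ·` solves the variational equation up to an error `o(‖h‖)`, and
-- `W · h` solves it exactly with the same initial value: Grönwall compares the two.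
theorem hasFDerivAt_of_variational (hΦ : IsFlow F Φ) (hF : LipschitzWith κ F)
    (hF₁ : ContDiff ℝ 1 F) {x₀ : E} {s : ℝ} (hs : 0 ≤ s) {W : ℝ → E →L[ℝ] E} (hW₀ : W 0 = 1)
    (hW : ∀ u ∈ Icc 0 s, HasDerivWithinAt W ((fderiv ℝ F (Φ x₀ u)).comp (W u)) (Icc 0 s) u) :
    HasFDerivAt (fun x => Φ x s) (W s) x₀ := by
  rw [hasFDerivAt_iff_isLittleO_nhds_zero, Asymptotics.isLittleO_iff]
  intro c hc
  set G := gronwallBound 0 κ 1 s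
  have hG : 0 ≤ G := by
    simpa [gronwallBound_x0] using gronwallBound_mono le_rfl zero_le_one κ.2 hs
  filter_upwards [hΦ.eventually_norm_sub_sub_fderiv_le hF hF₁ x₀
    (show 0 < c / (G + 1) by positivity)] with h hrem
  have hgron := dist_le_of_approx_trajectories_ODE (v := fun u y => fderiv ℝ F (Φ x₀ u) y)
    (f := fun u => Φ (x₀ + h) u - Φ x₀ u) (g := fun u => W u h) (δ := 0) (εg := 0)
    (fun u => (fderiv ℝ F (Φ x₀ u)).lipschitz.weaken (norm_fderiv_le_of_lipschitz ℝ hF))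
    ((hΦ.continuous _).sub (hΦ.continuous _)).continuousOn
    (fun u _ => ((hΦ.hasDerivAt _ u).sub (hΦ.hasDerivAt _ u)).hasDerivWithinAt)
    (fun u hu => by rw [dist_eq_norm]; exact hrem u (Ico_subset_Icc_self hu))
    (fun u hu => (hW u hu).continuousWithinAt.clm_apply continuousWithinAt_const)
    (fun u hu => ((hW u (Ico_subset_Icc_self hu)).clm_apply (hasDerivWithinAt_const _ _ h)
      |>.mono_of_mem_nhdsWithin (Icc_mem_nhdsGE_of_mem hu)))
    (fun u _ => by simp)
    (by simp [hΦ.apply_zero, hW₀]) s ⟨hs, le_rfl⟩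
  rw [dist_eq_norm, add_zero, sub_zero, gronwallBound_zero_eq_mul] at hgron
  calc _ ≤ c / (G + 1) * ‖h‖ * G := hgron
    _ = c * ‖h‖ * (G / (G + 1)) := by ring
    _ ≤ c * ‖h‖ :=
      mul_le_of_le_one_right (by positivity) ((div_le_one₀ (by linarith)).2 (by linarith))

end IsFlow

def LiouvilleFormula (F : E → E) (Φ : E → ℝ → E) (t : ℝ) : Prop :=
  ∀ x, DifferentiableAt ℝ (fun y => Φ y t) x ∧ (fderiv ℝ (fun y => Φ y t) x).det =
    Real.exp (∫ u in (0:ℝ)..t, LinearMap.trace ℝ E (fderiv ℝ F (Φ x u)))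

theorem LiouvilleFormula.of_reverse {t : ℝ}
    (h : LiouvilleFormula (-F) (fun x t => Φ x (-t)) t) : LiouvilleFormula F Φ (-t) := by
  intro x
  obtain ⟨hdiff, hdet⟩ := h x
  refine ⟨hdiff, hdet.trans ?_⟩
  simp only [fderiv_neg, ContinuousLinearMap.toLinearMap_neg, map_neg,
    intervalIntegral.integral_neg,
    intervalIntegral.integral_comp_neg (fun u => LinearMap.trace ℝ E (fderiv ℝ F (Φ x u))),
    intervalIntegral.integral_symm (-t) 0, neg_zero]

theorem IsFlow.liouvilleFormula_add [FiniteDimensional ℝ E] (hΦ : IsFlow F Φ)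
    (hF : LipschitzWith κ F) (hF₁ : ContDiff ℝ 1 F) {a b : ℝ} (ha : LiouvilleFormula F Φ a)
    (hb : LiouvilleFormula F Φ b) : LiouvilleFormula F Φ (a + b) := by
  intro x
  obtain ⟨hda, hdeta⟩ := ha x
  obtain ⟨hdb, hdetb⟩ := hb (Φ x a)
  set θ := fun u => LinearMap.trace ℝ E (fderiv ℝ F (Φ x u))
  have hθ : Continuous θ :=
    ((hF₁.continuous_fderiv one_ne_zero).comp (hΦ.continuous x)).linearMap_trace
  have hshift : ∫ u in (0:ℝ)..b, LinearMap.trace ℝ E (fderiv ℝ F (Φ (Φ x a) u)) =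
      ∫ u in a..a + b, θ u := by
    simp only [← hΦ.apply_add hF, θ, intervalIntegral.integral_comp_add_left θ, add_zero]
  have hcomp : (fun y => Φ y (a + b)) = (fun y => Φ y b) ∘ (fun y => Φ y a) :=
    funext fun y => hΦ.apply_add hF y a b
  refine ⟨hcomp ▸ hdb.comp x hda, ?_⟩
  rw [hcomp, fderiv_comp x hdb hda, ContinuousLinearMap.det,
    ContinuousLinearMap.toLinearMap_comp, LinearMap.det_comp, ← ContinuousLinearMap.det,
    ← ContinuousLinearMap.det, hdeta, hdetb, hshift, ← Real.exp_add, add_comm,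
    intervalIntegral.integral_add_adjacent_intervals (hθ.intervalIntegrable _ _)
      (hθ.intervalIntegrable _ _)]

theorem IsFlow.liouvilleFormula_of_mem_Icc [FiniteDimensional ℝ E] (hΦ : IsFlow F Φ)
    (hF : LipschitzWith κ F) (hF₁ : ContDiff ℝ 1 F) {t : ℝ}
    (ht : t ∈ Icc 0 (2 * (κ : ℝ) + 1)⁻¹) : LiouvilleFormula F Φ t := by
  intro x
  have hA : Continuous fun u => fderiv ℝ F (Φ x u) :=
    (hF₁.continuous_fderiv one_ne_zero).comp (hΦ.continuous x)
  obtain ⟨W, hW₀, hW⟩ := exists_hasDerivWithinAt_comp_of_norm_le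
    (τ := (2 * (κ : ℝ) + 1)⁻¹) (by positivity)
    (by rw [← div_eq_mul_inv, div_le_one (by positivity)]; linarith) hA.continuousOn
    (fun u _ => norm_fderiv_le_of_lipschitz ℝ hF)
  have hWt : ∀ u ∈ Icc 0 t, HasDerivWithinAt W ((fderiv ℝ F (Φ x u)).comp (W u)) (Icc 0 t) u :=
    fun u hu => (hW u ⟨hu.1, hu.2.trans ht.2⟩).mono (Icc_subset_Icc_right ht.2)
  have hderiv := hΦ.hasFDerivAt_of_variational hF hF₁ ht.1 hW₀ hWt
  exact ⟨hderiv.differentiableAt, hderiv.fderiv ▸ det_eq_exp_integral_trace ht.1 hA hW₀ hWt⟩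

theorem IsFlow.liouvilleFormula [FiniteDimensional ℝ E] (hΦ : IsFlow F Φ)
    (hF : LipschitzWith κ F) (hF₁ : ContDiff ℝ 1 F) (t : ℝ) : LiouvilleFormula F Φ t := by
  refine forall_of_add_of_forall_mem_Icc (τ := (2 * (κ : ℝ) + 1)⁻¹) (by positivity)
    (fun a b => hΦ.liouvilleFormula_add hF hF₁) (fun t ht => ?_) t
  rcases le_total 0 t with h0 | h0
  · exact hΦ.liouvilleFormula_of_mem_Icc hF hF₁ ⟨h0, ht.2⟩
  · simpa using (hΦ.reverse.liouvilleFormula_of_mem_Icc hF.neg hF₁.neg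
      ⟨neg_nonneg.2 h0, neg_le.1 ht.1⟩).of_reverse

theorem map_eq_withDensity_abs_det_fderiv [FiniteDimensional ℝ E] [MeasurableSpace E]
    [BorelSpace E] (μ : Measure E) [μ.IsAddHaarMeasure] {f g : E → E}
    (hf : Differentiable ℝ f) (hg : Continuous g) (hgf : Function.LeftInverse g f)
    (hfg : Function.RightInverse g f) :
    μ.map g = μ.withDensity fun x => ENNReal.ofReal |(fderiv ℝ f x).det| := by
  have h := map_withDensity_abs_det_fderiv_eq_addHaar μ nullMeasurableSet_univ
    (fun x _ => (hf x).hasFDerivAt.hasFDerivWithinAt) hgf.injective.injOn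
  rw [Measure.restrict_univ, image_univ, hfg.surjective.range_eq, Measure.restrict_univ] at h
  conv_lhs => rw [← h]
  rw [Measure.map_map hg.measurable hf.continuous.measurable, hgf.comp_eq_id, Measure.map_id]

end

theorem diverg_eq_trace {N : ℕ} (F : EuclideanSpace ℝ (Fin N) → EuclideanSpace ℝ (Fin N))
    (x : EuclideanSpace ℝ (Fin N)) :
    diverg F x = LinearMap.trace ℝ (EuclideanSpace ℝ (Fin N)) (fderiv ℝ F x) := by
  rw [LinearMap.trace_eq_matrix_trace ℝ (PiLp.basisFun 2 ℝ (Fin N)), Matrix.trace]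
  simp [diverg, LinearMap.toMatrix_apply]

theorem image_measure_absolutely_continuous_general
    {N : ℕ} (F : EuclideanSpace ℝ (Fin N) → EuclideanSpace ℝ (Fin N))
    (κ : ℝ≥0) (hF : LipschitzWith κ F) (hF₁ : ContDiff ℝ 1 F)
    (Φ : EuclideanSpace ℝ (Fin N) → ℝ → EuclideanSpace ℝ (Fin N))
    (hΦ₀ : ∀ x, Φ x 0 = x)
    (hΦ : ∀ x t, HasDerivAt (Φ x) (F (Φ x t)) t)
    (t : ℝ) :
    (volume.map (fun x => Φ x (-t))) ≪ (volume : Measure (EuclideanSpace ℝ (Fin N))) ∧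
      (volume.map (fun x => Φ x (-t))).rnDeriv volume
        =ᵐ[volume] fun x => ENNReal.ofReal (Real.exp (∫ s in (0:ℝ)..t, diverg F (Φ x s))) := by
  have hflow : IsFlow F Φ := ⟨hΦ₀, hΦ⟩
  have hL := hflow.liouvilleFormula hF hF₁
  have hmap := map_eq_withDensity_abs_det_fderiv volume (fun x => (hL t x).1)
    (Differentiable.continuous fun x => (hL (-t) x).1) (hflow.apply_neg_apply hF · t)
    (fun x => by simpa using hflow.apply_neg_apply hF x (-t))
  have hdensity : Measurable fun x => ENNReal.ofReal |(fderiv ℝ (fun y => Φ y t) x).det| :=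
    ENNReal.measurable_ofReal.comp
      (ContinuousLinearMap.continuous_det.measurable.comp (measurable_fderiv ℝ _)).abs
  rw [hmap]
  refine ⟨withDensity_absolutelyContinuous _ _, ?_⟩
  filter_upwards [Measure.rnDeriv_withDensity volume hdensity] with x hx
  simp only [hx, (hL t x).2, abs_of_pos (Real.exp_pos _), diverg_eq_trace]

/-- Let `F` be a `C¹`, globally Lipschitz vector field with bounded
divergence and let `Φ x` be the global flow of `F`.  For every `t ∈ ℝ`, the image of the
Lebesgue measure under `x ↦ Φ(x, −t)` is absolutely continuous with respect to the
Lebesgue measure, with Radon–Nikodym derivative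
`x ↦ exp (∫₀ᵗ div F (Φ(x,s)) ds)` almost everywhere. -/
theorem image_measure_absolutely_continuous
    {N : ℕ} (F : EuclideanSpace ℝ (Fin N) → EuclideanSpace ℝ (Fin N))
    (κ : ℝ≥0) (hκ : 0 < κ) (hF : LipschitzWith κ F) (hF₁ : ContDiff ℝ 1 F)
    (hdivb : ∃ C, ∀ x, |diverg F x| ≤ C)
    (Φ : EuclideanSpace ℝ (Fin N) → ℝ → EuclideanSpace ℝ (Fin N))
    (hΦ₀ : ∀ x, Φ x 0 = x)
    (hΦ : ∀ x t, HasDerivAt (Φ x) (F (Φ x t)) t)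
    (t : ℝ) :
    (volume.map (fun x => Φ x (-t))) ≪ (volume : Measure (EuclideanSpace ℝ (Fin N))) ∧
      (volume.map (fun x => Φ x (-t))).rnDeriv volume
        =ᵐ[volume] fun x => ENNReal.ofReal (Real.exp (∫ s in (0:ℝ)..t, diverg F (Φ x s))) :=
  image_measure_absolutely_continuous_general F κ hF hF₁ Φ hΦ₀ hΦ t
end
end

section
/- (Yorke's theorem.) Let F : ℝ^N → ℝ^N be Lipschitz with constant κ > 0 and let X : ℝ → ℝ^N be a nonconstant periodic solution of X'(t) = F(X(t)) with period T > 0. Then T ≥ 2π/κ. Equivalently, the prime period of any nonconstant periodic orbit of the flow of F is bounded below by 2π/κ. -/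
open scoped NNReal

noncomputable section

/-! If `κ T < 2π`, then `T / 2` is again a period. Indeed `y t = X (t + T / 2) - X t` satisfies
`‖y'‖ ≤ κ ‖y‖` and `y (T / 2) = -y 0`. If `y` vanishes somewhere, Gronwall's inequality and
periodicity make it vanish everywhere. Otherwise `y / ‖y‖` is a curve on the unit sphere with speed
at most `κ` joining two antipodal points in time `T / 2 < π / κ`; comparing the cosine of the angle
it has swept with `cos (κ t)` shows this is impossible. Iterating, the continuous map `X` has
arbitrarily small periods, hence is constant. -/

open Real Set Filter Topology Function InnerProductGeometry

theorem neg_one_lt_of_deriv_ge_neg_mul_sqrt {g g' : ℝ → ℝ} {κ L : ℝ}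
    (hκ : 0 ≤ κ) (hL : 0 ≤ L) (hκL : κ * L < π)
    (hg : ∀ t, HasDerivAt g (g' t) t) (hg0 : g 0 = 1)
    (hg' : ∀ t, -(κ * √(1 - g t ^ 2)) ≤ g' t) : -1 < g L := by
  obtain ⟨a, haL, hκa⟩ : ∃ a, a * L < π ∧ κ < a :=
    ((eventually_nhdsWithin_of_eventually_nhds
      ((continuous_mul_const L).continuousAt.eventually (gt_mem_nhds hκL))).and
      (self_mem_nhdsWithin : Ioi κ ∈ 𝓝[>] κ)).exists
  set ε := (π - a * L) / 2 with hε
  have hθ : ∀ t ∈ Icc 0 L, 0 < a * t + ε ∧ a * t + ε < π := fun t ht =>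
    ⟨by nlinarith [ht.1], by nlinarith [ht.2]⟩
  -- `cos (a t + ε)` solves `g' = -a √(1 - g ^ 2)`; `κ < a` and `0 < ε` make the fence strict
  have hcos_le : ∀ t ∈ Icc 0 L, cos (a * t + ε) ≤ g t := by
    have hB : ∀ t, HasDerivAt (fun t => -cos (a * t + ε)) (sin (a * t + ε) * a) t := fun t => by
      simpa using ((((hasDerivAt_id t).const_mul a).add_const ε).cos).fun_neg
    intro t ht
    refine neg_le_neg_iff.1 (image_le_of_deriv_right_lt_deriv_boundary (f' := fun t => -g' t)
      (fun t _ => (hg t).neg.continuousAt.continuousWithinAt)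
      (fun t _ => (hg t).neg.hasDerivWithinAt) (by simp [hg0, neg_le_neg_iff, cos_le_one]) hB
      (fun t ht hgt => ?_) ht)
    obtain ⟨hθ0, hθπ⟩ := hθ t (Ico_subset_Icc_self ht)
    have hsin : √(1 - g t ^ 2) = sin (a * t + ε) := by
      rw [neg_inj.1 hgt, sin_eq_sqrt_one_sub_cos_sq hθ0.le hθπ.le]
    have hsin_pos := sin_pos_of_pos_of_lt_pi hθ0 hθπ
    nlinarith [hg' t]
  obtain ⟨hθL0, hθLπ⟩ := hθ L ⟨hL, le_rfl⟩
  calc -1 = cos π := cos_pi.symm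
    _ < cos (a * L + ε) := cos_lt_cos_of_nonneg_of_le_pi hθL0.le le_rfl hθLπ
    _ ≤ g L := hcos_le L ⟨hL, le_rfl⟩

theorem eq_zero_of_norm_deriv_le_of_eq_zero {F : Type*} [NormedAddCommGroup F] [NormedSpace ℝ F]
    {y y' : ℝ → F} {κ t₀ t : ℝ}
    (hy : ∀ t, HasDerivAt y (y' t) t) (hy' : ∀ t, ‖y' t‖ ≤ κ * ‖y t‖)
    (h0 : y t₀ = 0) (ht : t₀ ≤ t) : y t = 0 := by
  have := norm_le_gronwallBound_of_norm_deriv_right_le (δ := 0) (K := κ) (ε := 0)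
    (fun s _ => (hy s).continuousAt.continuousWithinAt) (fun s _ => (hy s).hasDerivWithinAt)
    (by simp [h0]) (fun s _ => by simpa using hy' s) t ⟨ht, le_rfl⟩
  simpa [gronwallBound_ε0] using this

theorem Continuous.apply_eq_of_forall_exists_periodic {α : Type*} [TopologicalSpace α]
    [T2Space α] {f : ℝ → α} (hf : Continuous f) (h : ∀ ε > 0, ∃ c ∈ Ioo 0 ε, Periodic f c)
    (s t : ℝ) : f s = f t := by
  let periods : AddSubgroup ℝ :=
    { carrier := {c | Periodic f c}
      zero_mem' := fun x => by simp
      add_mem' := fun ha hb => ha.add_period hb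
      neg_mem' := fun h => h.neg }
  have hdense : Dense (periods : Set ℝ) :=
    periods.dense_of_not_isolated_zero fun ε hε => (h ε hε).imp fun c ⟨hc, hcp⟩ => ⟨hcp, hc⟩
  have := Continuous.ext_on hdense (hf.comp (continuous_const_add t)) continuous_const
    fun c hc => hc t
  simpa using congrFun this (s - t)

section InnerProductSpace

variable {E : Type*} [NormedAddCommGroup E] [InnerProductSpace ℝ E]

open scoped RealInnerProductSpace

theorem abs_inner_le_norm_mul_sqrt_one_sub_inner_sq {w z e : E} (hz : ‖z‖ = 1) (he : ‖e‖ = 1)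
    (hwz : ⟪w, z⟫ = 0) : |⟪w, e⟫| ≤ ‖w‖ * √(1 - ⟪z, e⟫ ^ 2) := by
  have hproj : ⟪w, e⟫ = ⟪w, e - ⟪z, e⟫ • z⟫ := by
    rw [inner_sub_right, real_inner_smul_right, hwz, mul_zero, sub_zero]
  have hnorm : ‖e - ⟪z, e⟫ • z‖ = √(1 - ⟪z, e⟫ ^ 2) := by
    rw [← sqrt_sq (norm_nonneg _), norm_sub_sq_real, real_inner_smul_right, norm_smul,
      real_inner_comm, hz, he, Real.norm_eq_abs, mul_one, sq_abs]
    ring_nf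
  rw [hproj, ← hnorm]
  exact abs_real_inner_le_norm _ _

theorem norm_sub_inner_smul_le {z : E} (hz : ‖z‖ = 1) (v : E) : ‖v - ⟪z, v⟫ • z‖ ≤ ‖v‖ := by
  refine (sq_le_sq₀ (norm_nonneg _) (norm_nonneg _)).1 ?_
  rw [norm_sub_sq_real, real_inner_smul_right, norm_smul, hz, Real.norm_eq_abs, real_inner_comm]
  nlinarith [sq_abs ⟪v, z⟫]

theorem HasDerivAt.norm_of_ne_zero {y : ℝ → E} {y' : E} {t : ℝ} (hy : HasDerivAt y y' t)
    (h0 : y t ≠ 0) : HasDerivAt (‖y ·‖) (⟪y t, y'⟫ / ‖y t‖) t := by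
  have := hy.norm_sq.sqrt (by positivity)
  simp only [sqrt_sq (norm_nonneg _)] at this
  convert this using 1
  field_simp

theorem HasDerivAt.inv_norm_smul {y : ℝ → E} {y' : E} {t : ℝ} (hy : HasDerivAt y y' t)
    (h0 : y t ≠ 0) :
    HasDerivAt (fun s => ‖y s‖⁻¹ • y s)
      (‖y t‖⁻¹ • (y' - ⟪‖y t‖⁻¹ • y t, y'⟫ • ‖y t‖⁻¹ • y t)) t := by
  have hr : ‖y t‖ ≠ 0 := norm_ne_zero_iff.2 h0
  convert ((hy.norm_of_ne_zero h0).fun_inv hr).fun_smul hy using 1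
  rw [smul_sub, real_inner_smul_left, smul_smul, smul_smul, sub_eq_add_neg, ← neg_smul]
  congr 2
  field_simp

theorem angle_lt_pi_of_norm_eq_one {z z' : ℝ → E} {κ L : ℝ} (hκ : 0 ≤ κ) (hL : 0 ≤ L)
    (hκL : κ * L < π) (hz : ∀ t, HasDerivAt z (z' t) t) (hunit : ∀ t, ‖z t‖ = 1)
    (hspeed : ∀ t, ‖z' t‖ ≤ κ) : angle (z 0) (z L) < π := by
  have horth : ∀ t, ⟪z' t, z t⟫ = 0 := fun t => by
    have hconst : (‖z ·‖ ^ 2) = fun _ => (1 : ℝ) := funext fun s => by simp [hunit s]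
    have := (hz t).norm_sq.unique (hconst ▸ hasDerivAt_const t 1)
    rw [real_inner_comm]
    linarith
  have hg : ∀ t, HasDerivAt (fun s => ⟪z s, z 0⟫) ⟪z' t, z 0⟫ t := fun t => by
    simpa using (hz t).inner ℝ (hasDerivAt_const t (z 0))
  have hg' : ∀ t, -(κ * √(1 - ⟪z t, z 0⟫ ^ 2)) ≤ ⟪z' t, z 0⟫ := fun t => by
    refine neg_le_of_abs_le ((abs_inner_le_norm_mul_sqrt_one_sub_inner_sq (hunit t) (hunit 0)
      (horth t)).trans ?_)
    gcongr
    exact hspeed t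
  have := neg_one_lt_of_deriv_ge_neg_mul_sqrt hκ hL hκL hg (by simp [hunit 0]) hg'
  rwa [angle, hunit, hunit, mul_one, div_one, arccos_lt_pi, real_inner_comm]

theorem angle_lt_pi_of_norm_deriv_le {y y' : ℝ → E} {κ L : ℝ} (hκ : 0 ≤ κ) (hL : 0 ≤ L)
    (hκL : κ * L < π) (hy : ∀ t, HasDerivAt y (y' t) t) (hy' : ∀ t, ‖y' t‖ ≤ κ * ‖y t‖)
    (h0 : ∀ t, y t ≠ 0) : angle (y 0) (y L) < π := by
  have hr : ∀ t, 0 < ‖y t‖ := fun t => norm_pos_iff.2 (h0 t)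
  have hunit : ∀ t, ‖‖y t‖⁻¹ • y t‖ = 1 := fun t => by
    rw [norm_smul, norm_inv, norm_norm, inv_mul_cancel₀ (hr t).ne']
  have hspeed : ∀ t, ‖‖y t‖⁻¹ • (y' t - ⟪‖y t‖⁻¹ • y t, y' t⟫ • ‖y t‖⁻¹ • y t)‖ ≤ κ := fun t => by
    rw [norm_smul, norm_inv, norm_norm, inv_mul_le_iff₀ (hr t), mul_comm]
    exact (norm_sub_inner_smul_le (hunit t) _).trans (hy' t)
  have := angle_lt_pi_of_norm_eq_one hκ hL hκL (fun t => (hy t).inv_norm_smul (h0 t)) hunit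
    hspeed
  rwa [angle_smul_left_of_pos _ _ (inv_pos.2 (hr 0)),
    angle_smul_right_of_pos _ _ (inv_pos.2 (hr L))] at this

theorem periodic_half_of_lipschitz {F : E → E} {κ : ℝ≥0} (hF : LipschitzWith κ F)
    {X : ℝ → E} (hX : ∀ t, HasDerivAt X (F (X t)) t) {S : ℝ} (hS : 0 < S)
    (hκS : κ * S < 2 * π) (hper : Periodic X S) : Periodic X (S / 2) := by
  set y : ℝ → E := fun t => X (t + S / 2) - X t
  have hy : ∀ t, HasDerivAt y (F (X (t + S / 2)) - F (X t)) t := fun t =>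
    ((hX (t + S / 2)).comp_add_const t (S / 2)).sub (hX t)
  have hy' : ∀ t, ‖F (X (t + S / 2)) - F (X t)‖ ≤ κ * ‖y t‖ := fun t => by
    simpa [dist_eq_norm] using hF.dist_le_mul (X (t + S / 2)) (X t)
  have hyper : Periodic y S := fun t => by
    simp only [y, add_right_comm t S, hper (t + S / 2), hper t]
  have hanti : y (S / 2) = -y 0 := by
    simp only [y, add_halves, zero_add, neg_sub, hper.eq]
  by_cases hzero : ∃ t₀, y t₀ = 0
  · obtain ⟨t₀, ht₀⟩ := hzero
    intro t
    obtain ⟨n, hn⟩ := exists_nat_gt ((t₀ - t) / S)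
    have hy_shift : y (t + n * S) = 0 := eq_zero_of_norm_deriv_le_of_eq_zero hy hy' ht₀ (by
      rw [div_lt_iff₀ hS] at hn; linarith)
    rw [hyper.nat_mul n t] at hy_shift
    exact sub_eq_zero.1 hy_shift
  · push Not at hzero
    have hangle := angle_lt_pi_of_norm_deriv_le (L := S / 2) κ.coe_nonneg (by positivity)
      (by linarith) hy hy' hzero
    rw [hanti, angle_self_neg_of_nonzero (hzero 0)] at hangle
    exact absurd hangle (lt_irrefl π)

theorem periodic_div_two_pow_of_lipschitz {F : E → E} {κ : ℝ≥0} (hF : LipschitzWith κ F)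
    {X : ℝ → E} (hX : ∀ t, HasDerivAt X (F (X t)) t) {S : ℝ} (hS : 0 < S)
    (hκS : κ * S < 2 * π) (hper : Periodic X S) (n : ℕ) : Periodic X (S / 2 ^ n) := by
  induction n with
  | zero => simpa using hper
  | succ n ih =>
    rw [pow_succ, ← div_div]
    refine periodic_half_of_lipschitz hF hX (by positivity) (lt_of_le_of_lt ?_ hκS) ih
    gcongr
    exact div_le_self hS.le (one_le_pow₀ one_le_two)

end InnerProductSpace

theorem yorke_period_lower_bound_general
    {N : ℕ} (F : EuclideanSpace ℝ (Fin N) → EuclideanSpace ℝ (Fin N))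
    (κ : ℝ≥0) (hF : LipschitzWith κ F)
    (X : ℝ → EuclideanSpace ℝ (Fin N))
    (hX : ∀ t, HasDerivAt X (F (X t)) t)
    (T : ℝ) (hT : 0 < T)
    (hper : ∀ t, X (t + T) = X t)
    (hnonconst : ∃ t s : ℝ, X t ≠ X s) :
    2 * Real.pi / κ ≤ T := by
  rcases eq_zero_or_pos κ with rfl | hκ
  · simpa using hT.le -- `2 * π / 0 = 0`
  by_contra! hTκ
  have hκT : κ * T < 2 * π := by
    rwa [lt_div_iff₀ (NNReal.coe_pos.2 hκ), mul_comm] at hTκ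
  have hsmall : ∀ ε > 0, ∃ c ∈ Ioo 0 ε, Periodic X c := fun ε hε => by
    obtain ⟨n, hn⟩ := exists_pow_lt_of_lt_one (div_pos hε hT) (one_half_lt_one (α := ℝ))
    refine ⟨T / 2 ^ n, ⟨by positivity, ?_⟩,
      periodic_div_two_pow_of_lipschitz hF hX hT hκT hper n⟩
    rwa [one_div_pow, lt_div_iff₀ hT, one_div_mul_eq_div] at hn
  have hXc : Continuous X := continuous_iff_continuousAt.2 fun u => (hX u).continuousAt
  obtain ⟨t, s, hts⟩ := hnonconst
  exact hts (hXc.apply_eq_of_forall_exists_periodic hsmall t s)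

/-- **Yorke's theorem.** If `F : ℝ^N → ℝ^N` is Lipschitz with constant
`κ > 0` and `X : ℝ → ℝ^N` is a nonconstant periodic solution of `X' = F ∘ X` with period
`T > 0`, then `T ≥ 2π/κ`. -/
theorem yorke_period_lower_bound
    {N : ℕ} (F : EuclideanSpace ℝ (Fin N) → EuclideanSpace ℝ (Fin N))
    (κ : ℝ≥0) (hκ : 0 < κ) (hF : LipschitzWith κ F)
    (X : ℝ → EuclideanSpace ℝ (Fin N))
    (hX : ∀ t, HasDerivAt X (F (X t)) t)
    (T : ℝ) (hT : 0 < T)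
    (hper : ∀ t, X (t + T) = X t)
    (hnonconst : ∃ t s : ℝ, X t ≠ X s) :
    2 * Real.pi / κ ≤ T :=
  yorke_period_lower_bound_general F κ hF X hX T hT hper hnonconst
end
end

section
/- Let (Σ, μ) be a measure space, let 0 < c ≤ T < ∞, let 𝔭 : Σ → [c, T] be measurable and let ϑ : Σ → ℝ be measurable and essentially bounded. For λ ∈ ℂ set M_λ(x) = exp(−𝔭(x)(λ − ϑ(x))), and for k ∈ ℤ set F_k(x) = ϑ(x) + i·2kπ/𝔭(x). Then 1 belongs to the essential range of M_λ if and only if λ belongs to the closure of ⋃_{k∈ℤ} R_ess(F_k), where R_ess(F_k) denotes the essential range of F_k. -/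
/-!
Since `F_k(x) - ϑ(x) = 2πik / 𝔭(x)`, we have `M_λ(x) = exp (-𝔭(x) (λ - F_k(x)))` for every `k`.
The logarithm is continuous at `1`, so `M_λ(x)` is close to `1` exactly when `-𝔭(x) (λ - F_k(x))`
is close to `0` for some `k`; as `c ≤ 𝔭 ≤ T`, this happens exactly when `F_k(x)` is close to `λ`.
On the other side, `λ` lies in the closure of `⋃ k, R_ess(F_k)` iff for every `ε > 0` some `F_k`
is `ε`-close to `λ` on a set of positive measure: a function into a second countable space takes
its values in its essential range almost everywhere.
-/

open MeasureTheory
open scoped ENNReal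

noncomputable section

def essRange {α E : Type*} [MeasurableSpace α] [PseudoMetricSpace E]
    (μ : Measure α) (g : α → E) : Set E :=
  {z | ∀ ε > 0, 0 < μ {x | dist (g x) z < ε}}

section EssRange

variable {α E : Type*} [MeasurableSpace α] [PseudoMetricSpace E] [SecondCountableTopology E]
  {μ : Measure α}

theorem ae_mem_essRange (g : α → E) : ∀ᵐ x ∂μ, g x ∈ essRange μ g := by
  have h : ∀ z ∈ (essRange μ g)ᶜ, ∃ ε > 0, μ {x | dist (g x) z < ε} = 0 := by
    intro z hz
    simpa [essRange, pos_iff_ne_zero] using hz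
  choose! ε hε hε_null using h
  obtain ⟨t, ht_sub, ht_count, ht_cover⟩ := TopologicalSpace.countable_cover_nhdsWithin
    (f := fun z => Metric.ball z (ε z)) fun z hz =>
      mem_nhdsWithin_of_mem_nhds (Metric.ball_mem_nhds z (hε z hz))
  refine measure_mono_null (fun x hx => ?_)
    ((measure_biUnion_null_iff ht_count).2 fun z hz => hε_null z (ht_sub hz))
  simpa using ht_cover hx

theorem exists_mem_essRange_dist_lt {g : α → E} {z : E} {ε : ℝ}
    (h : 0 < μ {x | dist (g x) z < ε}) : ∃ w ∈ essRange μ g, dist w z < ε := by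
  obtain ⟨x, hx, hxg⟩ := Measure.exists_mem_of_measure_ne_zero_of_ae h.ne'
    (ae_restrict_of_ae (ae_mem_essRange g))
  exact ⟨g x, hxg, hx⟩

theorem mem_closure_iUnion_essRange_iff {ι : Type*} (g : ι → α → E) (z : E) :
    z ∈ closure (⋃ i, essRange μ (g i)) ↔ ∀ ε > 0, ∃ i, 0 < μ {x | dist (g i x) z < ε} := by
  simp only [Metric.mem_closure_iff, Set.mem_iUnion]
  constructor
  · intro h ε hε
    obtain ⟨w, ⟨i, hw⟩, hzw⟩ := h (ε / 2) (half_pos hε)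
    refine ⟨i, (hw (ε / 2) (half_pos hε)).trans_le (measure_mono fun x hx => ?_)⟩
    calc dist (g i x) z ≤ dist (g i x) w + dist z w := dist_triangle_right _ _ _
      _ < ε / 2 + ε / 2 := add_lt_add hx hzw
      _ = ε := add_halves ε
  · intro h ε hε
    obtain ⟨i, hi⟩ := h ε hε
    obtain ⟨w, hw, hwz⟩ := exists_mem_essRange_dist_lt hi
    exact ⟨w, ⟨i, hw⟩, by rwa [dist_comm]⟩

end EssRange

section ComplexExp

open Complex
open scoped Real

theorem Complex.exists_near_int_mul_two_pi_I_of_exp_near_one {ε : ℝ} (hε : 0 < ε) :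
    ∃ δ > 0, ∀ w : ℂ, ‖exp w - 1‖ < δ → ∃ k : ℤ, ‖w - k * (2 * π * I)‖ < ε := by
  obtain ⟨δ, hδ, hlog⟩ := Metric.continuousAt_iff.1 (continuousAt_clog one_mem_slitPlane) ε hε
  refine ⟨δ, hδ, fun w hw => ?_⟩
  obtain ⟨k, hk⟩ := exp_eq_one_iff.1 <| show exp (w - log (exp w)) = 1 by
    rw [exp_sub, exp_log (exp_ne_zero w), div_self (exp_ne_zero w)]
  refine ⟨k, ?_⟩
  have hlog_small := hlog (by rwa [dist_eq])
  rw [log_one, dist_zero_right] at hlog_small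
  rwa [← hk, sub_sub_cancel]

theorem neg_ofReal_mul_sub_add_I_mul_div (lam : ℂ) (t : ℝ) {p : ℝ} (hp : p ≠ 0) (k : ℤ) :
    -(p : ℂ) * (lam - (t + I * (2 * k * π / p))) = -(p : ℂ) * (lam - t) + k * (2 * π * I) := by
  field_simp [ofReal_ne_zero.2 hp]
  ring

theorem exp_neg_ofReal_mul_sub_add_I_mul_div (lam : ℂ) (t : ℝ) {p : ℝ} (hp : p ≠ 0) (k : ℤ) :
    exp (-(p : ℂ) * (lam - (t + I * (2 * k * π / p)))) = exp (-(p : ℂ) * (lam - t)) := by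
  rw [neg_ofReal_mul_sub_add_I_mul_div lam t hp, exp_add, exp_int_mul_two_pi_mul_I, mul_one]

theorem norm_neg_ofReal_mul_sub (lam z : ℂ) {p : ℝ} (hp : 0 ≤ p) :
    ‖-(p : ℂ) * (lam - z)‖ = p * dist z lam := by
  rw [norm_mul, norm_neg, Complex.norm_of_nonneg hp, ← dist_eq_norm, dist_comm]

end ComplexExp

theorem one_in_essRange_iff_general
    {S : Type*} [MeasurableSpace S] (μ : Measure S)
    (c T : ℝ) (hc : 0 < c) (hcT : c ≤ T)
    (𝔭 : S → ℝ) (h𝔭 : ∀ x, 𝔭 x ∈ Set.Icc c T)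
    (ϑ : S → ℝ)
    (lam : ℂ) :
    (1 : ℂ) ∈ essRange μ (fun x => Complex.exp (-(𝔭 x : ℂ) * (lam - (ϑ x : ℂ)))) ↔
      lam ∈ closure (⋃ k : ℤ,
        essRange μ (fun x => (ϑ x : ℂ) + Complex.I * (2 * (k : ℂ) * (Real.pi : ℂ) / (𝔭 x : ℂ)))) := by
  have h𝔭_pos x : 0 < 𝔭 x := hc.trans_le (h𝔭 x).1
  have hnorm z x := norm_neg_ofReal_mul_sub lam z (h𝔭_pos x).le
  rw [mem_closure_iUnion_essRange_iff]
  constructor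
  · intro h1 ε hε
    obtain ⟨δ, hδ, hexp⟩ := Complex.exists_near_int_mul_two_pi_I_of_exp_near_one (mul_pos hc hε)
    refine exists_measure_pos_of_not_measure_iUnion_null fun hnull =>
      (h1 δ hδ).ne' (measure_mono_null (fun x hx => ?_) hnull)
    obtain ⟨k, hk⟩ := hexp _ (by rwa [← dist_eq_norm])
    refine Set.mem_iUnion.2 ⟨-k, lt_of_mul_lt_mul_left ?_ (h𝔭_pos x).le⟩
    rw [← hnorm, neg_ofReal_mul_sub_add_I_mul_div lam (ϑ x) (h𝔭_pos x).ne', Int.cast_neg,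
      neg_mul (k : ℂ), ← sub_eq_add_neg]
    exact hk.trans_le (mul_le_mul_of_nonneg_right (h𝔭 x).1 hε.le)
  · intro h2 δ hδ
    obtain ⟨η, hη, hexp⟩ :=
      Metric.continuousAt_iff.1 (Complex.continuous_exp.continuousAt (x := 0)) δ hδ
    have hT : 0 < T := hc.trans_le hcT
    obtain ⟨k, hk⟩ := h2 (η / T) (div_pos hη hT)
    refine hk.trans_le (measure_mono fun x hx => ?_)
    simp only [Set.mem_ofPred_eq]
    rw [← exp_neg_ofReal_mul_sub_add_I_mul_div lam (ϑ x) (h𝔭_pos x).ne' k, ← Complex.exp_zero]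
    refine hexp ?_
    rw [dist_zero_right, hnorm]
    calc 𝔭 x * _ ≤ T * _ := mul_le_mul_of_nonneg_right (h𝔭 x).2 dist_nonneg
      _ < T * (η / T) := mul_lt_mul_of_pos_left hx hT
      _ = η := mul_div_cancel₀ η hT.ne'

/-- Let `(Σ, μ)` be a measure space, `0 < c ≤ T < ∞`, `𝔭 : Σ → [c,T]`
measurable and `ϑ : Σ → ℝ` measurable and essentially bounded.  For `λ ∈ ℂ` set
`M_λ(x) = exp(−𝔭(x)(λ − ϑ(x)))` and, for `k ∈ ℤ`, `F_k(x) = ϑ(x) + 2ikπ/𝔭(x)`.  Then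
`1 ∈ R_ess(M_λ)` if and only if `λ ∈ closure (⋃ k, R_ess(F_k))`. -/
theorem one_in_essRange_iff
    {S : Type*} [MeasurableSpace S] (μ : Measure S)
    (c T : ℝ) (hc : 0 < c) (hcT : c ≤ T)
    (𝔭 : S → ℝ) (h𝔭meas : Measurable 𝔭) (h𝔭 : ∀ x, 𝔭 x ∈ Set.Icc c T)
    (ϑ : S → ℝ) (hϑmeas : Measurable ϑ) (hϑbdd : ∃ C, ∀ᵐ x ∂μ, |ϑ x| ≤ C)
    (lam : ℂ) :
    (1 : ℂ) ∈ essRange μ (fun x => Complex.exp (-(𝔭 x : ℂ) * (lam - (ϑ x : ℂ)))) ↔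
      lam ∈ closure (⋃ k : ℤ,
        essRange μ (fun x => (ϑ x : ℂ) + Complex.I * (2 * (k : ℂ) * (Real.pi : ℂ) / (𝔭 x : ℂ)))) :=
  one_in_essRange_iff_general μ c T hc hcT 𝔭 h𝔭 ϑ lam
end
end
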